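/- Let p be a prime, k a field of characteristic p, and P a finite p-group. Let s, t be elements of the center of P of order p with ⟨s⟩ ∩ ⟨t⟩ = {1}. Set A = kP. Let (λ,μ) and (λ′,μ′) be elements of k² ∖ {(0,0)}, and set x = λ(s−1) + μ(t−1) and x′ = λ′(s−1) + μ′(t−1) in A. Then A·x is an indecomposable left A-module, and the following are equivalent: (i) A·x ≅ A·x′ as left A-modules; (ii) A·x = A·x′ as subsets of A; (iii) there exists c ∈ k^× with λ′ = cλ and μ′ = cμ. -/

import Mathlib

/-!
Put `X = s - 1` and `Y = t - 1`. These commute, `X ^ p = Y ^ p = 0`, and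
`X ^ (p-1) * Y ^ (p-1) = (∑ sⁱ) * (∑ tʲ)` is nonzero because `⟨s⟩ ∩ ⟨t⟩ = 1`.

Every nonzero left ideal of `kP` contains the norm element `∑ g`: the additive group spanned by
the `P`-orbit of a nonzero vector is a finite `p`-group, so the `p`-group `P` fixes a nonzero
vector in it. Hence any two nonzero submodules of `A·x` meet, and `A·x` is indecomposable.

Since `x` is central and `x ^ p = 0`, the element `x ^ (p-1)` annihilates `A·x`, hence every module
isomorphic to it, so (i) gives `x ^ (p-1) * x' = 0`. If `λμ' - μλ' ≠ 0`, then `X` and `Y` are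
combinations of `x` and `x'`, so `x ^ (p-1)` kills `X` and `Y`. But
`x ^ (p-1) * Y ^ (p-1) = λ ^ (p-1) • X ^ (p-1) * Y ^ (p-1)` and symmetrically for `μ`, forcing
`λ = μ = 0`.
-/

def IsIndecomposableModule (A : Type*) (M : Type*) [Ring A] [AddCommGroup M]
    [Module A M] : Prop :=
  (∃ m : M, m ≠ 0) ∧
    ∀ W W' : Submodule A M, W ⊓ W' = ⊥ → W ⊔ W' = ⊤ → W = ⊥ ∨ W' = ⊥

open MonoidAlgebra Finset

theorem isIndecomposableModule_of_inf_ne_bot {A M : Type*} [Ring A] [AddCommGroup M]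
    [Module A M] [Nontrivial M]
    (h : ∀ W W' : Submodule A M, W ≠ ⊥ → W' ≠ ⊥ → W ⊓ W' ≠ ⊥) :
    IsIndecomposableModule A M := by
  refine ⟨exists_ne 0, fun W W' hinf _ => ?_⟩
  by_contra! hne
  exact h W W' hne.1 hne.2 hinf

theorem mul_eq_zero_of_linearEquiv_span_singleton {A : Type*} [Ring A] {z x y : A}
    (e : Submodule.span A {x} ≃ₗ[A] Submodule.span A {y}) (hz : ∀ a, Commute z a)
    (hzx : z * x = 0) : z * y = 0 := by
  have hann : z ∈ Module.annihilator A (Submodule.span A {x}) := by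
    refine Module.mem_annihilator.mpr fun ⟨m, hm⟩ => ?_
    obtain ⟨a, rfl⟩ := Submodule.mem_span_singleton.mp hm
    ext
    change z * (a * x) = 0
    rw [← mul_assoc, (hz a).eq, mul_assoc, hzx, mul_zero]
  rw [e.annihilator_eq, Module.mem_annihilator] at hann
  simpa using congrArg Subtype.val (hann ⟨y, Submodule.mem_span_singleton_self y⟩)

theorem Commute.add_pow_mul_eq_pow_mul {R : Type*} [Semiring R] {u w v : R} (h : Commute u w)
    (hwv : w * v = 0) (n : ℕ) : (u + w) ^ n * v = u ^ n * v := by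
  induction n generalizing v with
  | zero => simp
  | succ n ih =>
    have hwuv : w * (u * v) = 0 := by rw [← mul_assoc, ← h.eq, mul_assoc, hwv, mul_zero]
    rw [pow_succ, mul_assoc, add_mul, hwv, add_zero, ih hwuv, ← mul_assoc, ← pow_succ]

theorem exists_unit_of_mul_sub_mul_eq_zero {k : Type*} [Field k] {a b a' b' : k}
    (hab : (a, b) ≠ (0, 0)) (hab' : (a', b') ≠ (0, 0)) (h : a * b' - b * a' = 0) :
    ∃ c : kˣ, a' = c * a ∧ b' = c * b := by
  rcases eq_or_ne a 0 with rfl | ha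
  · have hb : b ≠ 0 := by rintro rfl; exact hab rfl
    have ha' : a' = 0 := by simpa [hb] using h
    have hb' : b' ≠ 0 := by rintro rfl; exact hab' (by rw [ha'])
    exact ⟨Units.mk0 (b' / b) (div_ne_zero hb' hb), by simp [ha'], by simp [hb]⟩
  · have ha' : a' ≠ 0 := by
      rintro rfl
      exact hab' (by simp_all)
    refine ⟨Units.mk0 (a' / a) (div_ne_zero ha' ha), by simp [ha], ?_⟩
    simp only [Units.val_mk0]
    field_simp
    linear_combination h

theorem span_singleton_unit_mul_smul_add_unit_mul_smul {k A : Type*} [Field k] [Ring A]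
    [Algebra k A] (X Y : A) (a b : k) (c : kˣ) :
    Submodule.span A {(c * a) • X + (c * b) • Y} = Submodule.span A {a • X + b • Y} := by
  rw [mul_smul, mul_smul, ← smul_add, ← Units.smul_def, Submodule.span_singleton_group_smul_eq]

section CharP

variable {p : ℕ} [Fact p.Prime]

theorem sub_one_pow_pred_eq_sum_pow {k A : Type*} [Field k] [CharP k p] [Ring A] [Algebra k A]
    (a : A) : (a - 1) ^ (p - 1) = ∑ i ∈ range p, a ^ i := by
  have key :
      ((Polynomial.X : Polynomial k) - 1) ^ (p - 1) = ∑ i ∈ range p, Polynomial.X ^ i := by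
    refine mul_left_cancel₀ (Polynomial.X_sub_C_ne_zero (1 : k)) ?_
    rw [map_one, ← pow_succ', Nat.sub_add_cancel (Fact.out : p.Prime).one_le, sub_pow_char,
      one_pow, mul_geom_sum]
  simpa using congrArg (Polynomial.aeval a) key

section SmulAddSmul

variable {k A : Type*} [Field k] [Ring A] [Algebra k A] {X Y : A}

theorem smul_add_smul_pow_char [CharP A p] (hXY : Commute X Y) (hX : X ^ p = 0)
    (hY : Y ^ p = 0) (a b : k) : (a • X + b • Y) ^ p = 0 := by
  rw [add_pow_char_of_commute p ((hXY.smul_left a).smul_right b), smul_pow, smul_pow, hX, hY,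
    smul_zero, smul_zero, add_zero]

theorem smul_add_smul_pow_pred_mul_pow_pred (hXY : Commute X Y) (hY : Y ^ p = 0) (a b : k) :
    (a • X + b • Y) ^ (p - 1) * Y ^ (p - 1) = a ^ (p - 1) • (X ^ (p - 1) * Y ^ (p - 1)) := by
  have hbY : b • Y * Y ^ (p - 1) = 0 := by
    rw [smul_mul_assoc, ← pow_succ', Nat.sub_add_cancel (Fact.out : p.Prime).one_le, hY,
      smul_zero]
  rw [((hXY.smul_left a).smul_right b).add_pow_mul_eq_pow_mul hbY, smul_pow, smul_mul_assoc]

theorem eq_zero_of_smul_add_smul_pow_pred_mul_eq_zero (hXY : Commute X Y) (hX : X ^ p = 0)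
    (hY : Y ^ p = 0) (hN : X ^ (p - 1) * Y ^ (p - 1) ≠ 0) {a b : k}
    (hzX : (a • X + b • Y) ^ (p - 1) * X = 0) (hzY : (a • X + b • Y) ^ (p - 1) * Y = 0) :
    a = 0 ∧ b = 0 := by
  have hp := (Fact.out : p.Prime).two_le
  have hpow {V : A} (hV : (a • X + b • Y) ^ (p - 1) * V = 0) :
      (a • X + b • Y) ^ (p - 1) * V ^ (p - 1) = 0 := by
    rw [show V ^ (p - 1) = V * V ^ (p - 2) by rw [← pow_succ']; congr 1; omega, ← mul_assoc, hV,
      zero_mul]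
  have hYN := hpow hzY
  have hXN := hpow hzX
  rw [smul_add_smul_pow_pred_mul_pow_pred hXY hY] at hYN
  rw [add_comm, smul_add_smul_pow_pred_mul_pow_pred hXY.symm hX, ← (hXY.pow_pow _ _).eq] at hXN
  exact ⟨eq_zero_of_pow_eq_zero ((smul_eq_zero.mp hYN).resolve_right hN),
    eq_zero_of_pow_eq_zero ((smul_eq_zero.mp hXN).resolve_right hN)⟩

theorem smul_add_smul_ne_zero (hXY : Commute X Y) (hX : X ^ p = 0) (hY : Y ^ p = 0)
    (hN : X ^ (p - 1) * Y ^ (p - 1) ≠ 0) {a b : k} (hab : (a, b) ≠ (0, 0)) :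
    a • X + b • Y ≠ 0 := by
  intro h
  have hp := (Fact.out : p.Prime).two_le
  have hz (V : A) : (a • X + b • Y) ^ (p - 1) * V = 0 := by
    rw [h, zero_pow (by omega), zero_mul]
  obtain ⟨rfl, rfl⟩ := eq_zero_of_smul_add_smul_pow_pred_mul_eq_zero hXY hX hY hN (hz X) (hz Y)
  exact hab rfl

theorem mul_sub_mul_eq_zero_of_smul_add_smul_pow_pred_mul_eq_zero [CharP A p]
    (hXY : Commute X Y) (hX : X ^ p = 0) (hY : Y ^ p = 0) (hN : X ^ (p - 1) * Y ^ (p - 1) ≠ 0)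
    {a b a' b' : k} (hab : (a, b) ≠ (0, 0))
    (h : (a • X + b • Y) ^ (p - 1) * (a' • X + b' • Y) = 0) :
    a * b' - b * a' = 0 := by
  set z := a • X + b • Y
  have hzz : z ^ (p - 1) * z = 0 := by
    rw [← pow_succ, Nat.sub_add_cancel (Fact.out : p.Prime).one_le,
      smul_add_smul_pow_char hXY hX hY]
  by_contra hD
  have hann {V : A} {c c' : k}
      (hV : (a * b' - b * a') • V = c • z + c' • (a' • X + b' • Y)) : z ^ (p - 1) * V = 0 := by
    refine (smul_eq_zero.mp ?_).resolve_left hD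
    rw [← mul_smul_comm, hV, mul_add, mul_smul_comm, mul_smul_comm, hzz, h, smul_zero, smul_zero,
      add_zero]
  obtain ⟨rfl, rfl⟩ := eq_zero_of_smul_add_smul_pow_pred_mul_eq_zero hXY hX hY hN
    (hann (c := b') (c' := -b) (by module)) (hann (c := -a') (c' := a) (by module))
  exact hab rfl

end SmulAddSmul

instance MonoidAlgebra.charP_of_field {k G : Type*} [Field k] [CharP k p] [Monoid G] :
    CharP (MonoidAlgebra k G) p :=
  charP_of_injective_algebraMap (algebraMap k _).injective p

theorem of_sub_one_pow_char_eq_zero (k : Type*) {G : Type*} [Field k] [CharP k p] [Monoid G]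
    {g : G} (hg : g ^ p = 1) : (of k G g - 1) ^ p = 0 := by
  rw [sub_pow_char_of_commute p (Commute.one_right _), ← map_pow, hg, map_one, one_pow, sub_self]

theorem pow_mul_pow_eq_one_iff {G : Type*} [Group G] {s t : G}
    (hst : Subgroup.zpowers s ⊓ Subgroup.zpowers t = ⊥) {i j : ℕ} (hi : i < orderOf s)
    (hj : j < orderOf t) : s ^ i * t ^ j = 1 ↔ i = 0 ∧ j = 0 := by
  refine ⟨fun h => ?_, by rintro ⟨rfl, rfl⟩; simp⟩
  have hsi : s ^ i = 1 := by
    have hmem : s ^ i ∈ Subgroup.zpowers s ⊓ Subgroup.zpowers t :=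
      ⟨Subgroup.npow_mem_zpowers s i, eq_inv_of_mul_eq_one_left h ▸
        Subgroup.inv_mem _ (Subgroup.npow_mem_zpowers t j)⟩
    rwa [hst, Subgroup.mem_bot] at hmem
  rw [hsi, one_mul] at h
  by_contra hij
  rcases not_and_or.mp hij with hi0 | hj0
  · exact pow_ne_one_of_lt_orderOf hi0 hi hsi
  · exact pow_ne_one_of_lt_orderOf hj0 hj h

theorem of_sub_one_pow_pred_mul_of_sub_one_pow_pred_ne_zero (k : Type*) {P : Type*} [Field k]
    [CharP k p] [Group P] {s t : P} (hso : orderOf s = p) (hto : orderOf t = p)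
    (hst : Subgroup.zpowers s ⊓ Subgroup.zpowers t = ⊥) :
    (of k P s - 1) ^ (p - 1) * (of k P t - 1) ^ (p - 1) ≠ 0 := by
  classical
  have hcoeff : ∀ i ∈ range p, ∀ j ∈ range p,
      (of k P (s ^ i * t ^ j)).coeff 1 = if i = 0 ∧ j = 0 then 1 else 0 := fun i hi j hj => by
    simp only [of_apply, coeff_single, Finsupp.single_apply,
      pow_mul_pow_eq_one_iff hst (hso ▸ mem_range.mp hi) (hto ▸ mem_range.mp hj)]
  have hp := (Fact.out : p.Prime).pos
  rw [sub_one_pow_pred_eq_sum_pow (k := k), sub_one_pow_pred_eq_sum_pow (k := k), sum_mul_sum]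
  intro h
  have h1 := congrArg (fun a : MonoidAlgebra k P => a.coeff 1) h
  simp only [← map_pow, ← map_mul] at h1
  simp only [coeff_sum, Finsupp.finsetSum_apply] at h1
  rw [sum_congr rfl fun i hi => sum_congr rfl (hcoeff i hi)] at h1
  simp [ite_and, hp] at h1

end CharP

theorem of_sub_one_commute {k P : Type*} [Field k] [Group P] {s : P}
    (hs : s ∈ Subgroup.center P) (a : MonoidAlgebra k P) : Commute (of k P s - 1) a :=
  (of_commute (fun g => (Subgroup.mem_center_iff.mp hs g).symm) a).sub_left (Commute.one_left a)

section Socle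

variable {k P : Type*} [Field k] [Group P] [Fintype P]

variable (k P) in
noncomputable def normElement : MonoidAlgebra k P := ∑ g : P, of k P g

theorem normElement_coeff (g : P) : (normElement k P).coeff g = 1 := by
  classical
  simp [normElement, coeff_sum, Finsupp.finsetSum_apply, of_apply, Finsupp.single_apply]

theorem normElement_ne_zero : normElement k P ≠ 0 := fun h => by
  simpa [h] using normElement_coeff (k := k) (1 : P)

theorem eq_coeff_one_smul_normElement {u : MonoidAlgebra k P} (hu : ∀ g, of k P g * u = u) :
    u = u.coeff 1 • normElement k P := by
  ext g
  have hg := congrArg (fun a : MonoidAlgebra k P => a.coeff g) (hu g)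
  simp only [of_apply, coeff_single_mul_apply, inv_mul_cancel, one_mul] at hg
  rw [coeff_smul, Finsupp.smul_apply, normElement_coeff, smul_eq_mul, mul_one, ← hg]

theorem exists_ne_zero_forall_of_mul_eq_self {p : ℕ} [Fact p.Prime] [CharP k p]
    (hP : IsPGroup p P) {W : Submodule (MonoidAlgebra k P) (MonoidAlgebra k P)}
    {w : MonoidAlgebra k P} (hw : w ∈ W) (hw0 : w ≠ 0) :
    ∃ u ∈ W, u ≠ 0 ∧ ∀ g, of k P g * u = u := by
  set V := AddSubgroup.closure (Set.range fun g : P => of k P g * w)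
  have hVW : V ≤ W.toAddSubgroup := (AddSubgroup.closure_le _).mpr <| by
    rintro _ ⟨g, rfl⟩
    exact W.smul_mem (of k P g) hw
  have hwV : w ∈ V := AddSubgroup.subset_closure ⟨1, by simp only [map_one, one_mul]⟩
  have hstable (g : P) {v : MonoidAlgebra k P} (hv : v ∈ V) : of k P g * v ∈ V := by
    induction hv using AddSubgroup.closure_induction with
    | mem _ h =>
      obtain ⟨h, rfl⟩ := h
      exact AddSubgroup.subset_closure ⟨g * h, by simp only [map_mul, mul_assoc]⟩
    | zero => simp
    | add _ _ _ _ h₁ h₂ => simpa [mul_add] using V.add_mem h₁ h₂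
    | neg _ _ h => simpa [mul_neg] using V.neg_mem h
  have hpV (v : V) : p • v = 0 := Subtype.ext <| by simp [nsmul_eq_mul, CharP.cast_eq_zero]
  have : Finite V := AddCommGroup.finite_of_fg_isAddTorsion V fun v =>
    isOfFinAddOrder_iff_nsmul_eq_zero.mpr ⟨p, (Fact.out : p.Prime).pos, hpV v⟩
  let : MulAction P V :=
    { smul g v := ⟨of k P g * v, hstable g v.2⟩
      one_smul v := Subtype.ext (by
        change of k P 1 * (v : MonoidAlgebra k P) = v
        rw [map_one, one_mul])
      mul_smul g h v := Subtype.ext (by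
        change of k P (g * h) * (v : MonoidAlgebra k P) = of k P g * (of k P h * v)
        rw [map_mul, mul_assoc]) }
  have hcard : p ∣ Nat.card V :=
    addOrderOf_eq_prime (hpV ⟨w, hwV⟩) (by simpa using hw0) ▸ addOrderOf_dvd_natCard _
  obtain ⟨u, hu, hu0⟩ := hP.exists_fixed_point_of_prime_dvd_card_of_fixed_point V hcard (a := 0)
    fun g => Subtype.ext (mul_zero _)
  exact ⟨u, hVW u.2, fun h => hu0 (Subtype.ext h.symm), fun g => congrArg Subtype.val (hu g)⟩

theorem normElement_mem {p : ℕ} [Fact p.Prime] [CharP k p] (hP : IsPGroup p P)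
    {W : Submodule (MonoidAlgebra k P) (MonoidAlgebra k P)} {w : MonoidAlgebra k P} (hw : w ∈ W)
    (hw0 : w ≠ 0) : normElement k P ∈ W := by
  obtain ⟨u, huW, hu0, hu⟩ := exists_ne_zero_forall_of_mul_eq_self hP hw hw0
  have hu' := eq_coeff_one_smul_normElement hu
  set c := u.coeff 1
  have hc : c ≠ 0 := fun h => hu0 (by rw [hu', h, zero_smul])
  rw [hu'] at huW
  simpa [smul_smul, inv_mul_cancel₀ hc] using W.smul_of_tower_mem c⁻¹ huW

theorem isIndecomposableModule_of_ne_bot {p : ℕ} [Fact p.Prime] [CharP k p]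
    (hP : IsPGroup p P) {M : Submodule (MonoidAlgebra k P) (MonoidAlgebra k P)} (hM : M ≠ ⊥) :
    IsIndecomposableModule (MonoidAlgebra k P) M := by
  have := Submodule.nontrivial_iff_ne_bot.mpr hM
  have hN {V : Submodule (MonoidAlgebra k P) M} (hV : V ≠ ⊥) :
      ∃ v ∈ V, (v : MonoidAlgebra k P) = normElement k P := by
    obtain ⟨v, hv, hv0⟩ := V.ne_bot_iff.mp hV
    exact Submodule.mem_map.mp <|
      normElement_mem hP (Submodule.mem_map_of_mem (f := M.subtype) hv) (by simpa using hv0)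
  refine isIndecomposableModule_of_inf_ne_bot fun W W' hW hW' => ?_
  obtain ⟨v, hv, hvN⟩ := hN hW
  obtain ⟨v', hv', hv'N⟩ := hN hW'
  have hvv' : v = v' := Subtype.ext (hvN.trans hv'N.symm)
  refine (Submodule.ne_bot_iff _).mpr ⟨v, ⟨hv, hvv' ▸ hv'⟩, ?_⟩
  rintro rfl
  exact normElement_ne_zero hvN.symm

end Socle

theorem stmt4 {k P : Type} (p : ℕ) [Fact p.Prime] [Field k] [CharP k p]
    [Group P] [Finite P] (hP : IsPGroup p P)
    (s t : P) (hs : s ∈ Subgroup.center P) (ht : t ∈ Subgroup.center P)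
    (hso : orderOf s = p) (hto : orderOf t = p)
    (hst : Subgroup.zpowers s ⊓ Subgroup.zpowers t = ⊥)
    (lam mu lam' mu' : k) (hlm : (lam, mu) ≠ (0, 0)) (hlm' : (lam', mu') ≠ (0, 0))
    (x x' : MonoidAlgebra k P)
    (hx : x = lam • (MonoidAlgebra.of k P s - 1) + mu • (MonoidAlgebra.of k P t - 1))
    (hx' : x' = lam' • (MonoidAlgebra.of k P s - 1) + mu' • (MonoidAlgebra.of k P t - 1)) :
    IsIndecomposableModule (MonoidAlgebra k P)
        (Submodule.span (MonoidAlgebra k P) {x}) ∧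
      ((Nonempty ((Submodule.span (MonoidAlgebra k P) {x}) ≃ₗ[MonoidAlgebra k P]
          (Submodule.span (MonoidAlgebra k P) {x'}))) ↔
        Submodule.span (MonoidAlgebra k P) {x}
          = Submodule.span (MonoidAlgebra k P) {x'}) ∧
      ((Submodule.span (MonoidAlgebra k P) {x}
          = Submodule.span (MonoidAlgebra k P) {x'}) ↔
        ∃ c : kˣ, lam' = (c : k) * lam ∧ mu' = (c : k) * mu) := by
  have := Fintype.ofFinite P
  have hX := of_sub_one_pow_char_eq_zero k (hso ▸ pow_orderOf_eq_one s)
  have hY := of_sub_one_pow_char_eq_zero k (hto ▸ pow_orderOf_eq_one t)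
  have hXY := of_sub_one_commute hs (of k P t - 1)
  have hN := of_sub_one_pow_pred_mul_of_sub_one_pow_pred_ne_zero k hso hto hst
  have hxc (a : MonoidAlgebra k P) : Commute (x ^ (p - 1)) a :=
    (hx ▸ ((of_sub_one_commute hs a).smul_left lam).add_left
      ((of_sub_one_commute ht a).smul_left mu)).pow_left _
  have hxx : x ^ (p - 1) * x = 0 := by
    rw [← pow_succ, Nat.sub_add_cancel (Fact.out : p.Prime).one_le, hx,
      smul_add_smul_pow_char hXY hX hY]
  have to_iii (h : x ^ (p - 1) * x' = 0) : ∃ c : kˣ, lam' = c * lam ∧ mu' = c * mu :=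
    exists_unit_of_mul_sub_mul_eq_zero hlm hlm' <|
      mul_sub_mul_eq_zero_of_smul_add_smul_pow_pred_mul_eq_zero hXY hX hY hN hlm (hx ▸ hx' ▸ h)
  have of_iii : (∃ c : kˣ, lam' = c * lam ∧ mu' = c * mu) →
      Submodule.span (MonoidAlgebra k P) {x} = Submodule.span (MonoidAlgebra k P) {x'} := by
    rintro ⟨c, rfl, rfl⟩
    rw [hx, hx', span_singleton_unit_mul_smul_add_unit_mul_smul]
  have hx0 : x ≠ 0 := hx ▸ smul_add_smul_ne_zero hXY hX hY hN hlm
  refine ⟨isIndecomposableModule_of_ne_bot hP (Submodule.span_singleton_eq_bot.not.mpr hx0),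
    ⟨fun ⟨e⟩ => of_iii (to_iii (mul_eq_zero_of_linearEquiv_span_singleton e hxc hxx)),
      fun h => ⟨h ▸ LinearEquiv.refl _ _⟩⟩,
    fun h => to_iii (mul_eq_zero_of_linearEquiv_span_singleton (h ▸ .refl _ _) hxc hxx), of_iii⟩
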